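/- arXiv:1703.01059 — 2 statements merged into one kernel-verified Lean document; each statement's English description precedes it below -/
import Mathlib

section
/- For the Werner state σ_p with p ∈ [0,1), one has S(σ_p) ≥ 1 (equivalently σ_p ∈ ACVENN) if and only if 3(1−p)log₂(1−p) + (1+3p)log₂(1+3p) ≤ 4. In particular the eigenvalues of σ_p are (1+3p)/4 with multiplicity one and (1−p)/4 with multiplicity three. -/
open Matrix Finset
open scoped Kronecker ComplexOrder Classical

noncomputable section

/-- A quantum state: positive semidefinite matrix of trace 1. -/
def IsState {n : ℕ} (ρ : Matrix (Fin n) (Fin n) ℂ) : Prop :=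
  ρ.PosSemidef ∧ ρ.trace = 1

/-- Von Neumann entropy `S(ρ) = -∑ᵢ λᵢ log₂ λᵢ` over the eigenvalues of `ρ`
(with the convention `0 · log₂ 0 = 0`, which holds since `Real.logb 2 0 = 0`). -/
noncomputable def vnEntropy {n : ℕ} (ρ : Matrix (Fin n) (Fin n) ℂ) : ℝ :=
  if h : ρ.IsHermitian then -∑ i, h.eigenvalues i * Real.logb 2 (h.eigenvalues i) else 0

/-- Reduced state `ρ_A`: partial trace over the second tensor factor,
using the ordered product basis `|00⟩,|01⟩,|10⟩,|11⟩`, i.e. `|ab⟩ ↦ 2a+b`. -/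
def ptraceB (ρ : Matrix (Fin 4) (Fin 4) ℂ) : Matrix (Fin 2) (Fin 2) ℂ :=
  Matrix.of fun i j => ∑ k : Fin 2,
    ρ ⟨2 * i.val + k.val, by omega⟩ ⟨2 * j.val + k.val, by omega⟩

/-- Reduced state `ρ_B`: partial trace over the first tensor factor. -/
def ptraceA (ρ : Matrix (Fin 4) (Fin 4) ℂ) : Matrix (Fin 2) (Fin 2) ℂ :=
  Matrix.of fun i j => ∑ k : Fin 2,
    ρ ⟨2 * k.val + i.val, by omega⟩ ⟨2 * k.val + j.val, by omega⟩

/-- Conditional von Neumann entropy `S(A|B) = S(ρ_AB) - S(ρ_A)`. -/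
def condEntropy (ρ : Matrix (Fin 4) (Fin 4) ℂ) : ℝ :=
  vnEntropy ρ - vnEntropy (ptraceB ρ)

/-- Rank-one projector `|v⟩⟨v|`. -/
def proj (v : Fin 4 → ℂ) : Matrix (Fin 4) (Fin 4) ℂ := Matrix.vecMulVec v (star v)

/-- The Bell basis `|φ⁺⟩, |φ⁻⟩, |ψ⁺⟩, |ψ⁻⟩`. -/
noncomputable def bell : Fin 4 → Fin 4 → ℂ :=
  ![![(Real.sqrt 2 : ℂ)⁻¹, 0, 0, (Real.sqrt 2 : ℂ)⁻¹],
    ![(Real.sqrt 2 : ℂ)⁻¹, 0, 0, -(Real.sqrt 2 : ℂ)⁻¹],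
    ![0, (Real.sqrt 2 : ℂ)⁻¹, (Real.sqrt 2 : ℂ)⁻¹, 0],
    ![0, (Real.sqrt 2 : ℂ)⁻¹, -(Real.sqrt 2 : ℂ)⁻¹, 0]]

/-- Kronecker product of two one-qubit matrices as a `4 × 4` matrix,
with the index identification `(a,b) ↦ 2a+b`. -/
def kron (A B : Matrix (Fin 2) (Fin 2) ℂ) : Matrix (Fin 4) (Fin 4) ℂ :=
  Matrix.reindex finProdFinEquiv finProdFinEquiv (A ⊗ₖ B)

/-- The Werner state `σ_p = p|φ⁺⟩⟨φ⁺| + (1-p) I₄/4`. -/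
noncomputable def werner (p : ℝ) : Matrix (Fin 4) (Fin 4) ℂ :=
  (p : ℂ) • proj (bell 0) + (((1 - p) / 4 : ℝ) : ℂ) • 1

/-!
The Werner state is a scalar matrix plus a rank-one term, `σ_p = ((1 - p)/4) I + p |φ⁺⟩⟨φ⁺|`.
For any matrix `c I + p |v⟩⟨v|` with `‖v‖ = 1`, an eigenvector is either orthogonal to `v`
(eigenvalue `c`) or not, and then its eigenvalue is `c + p`; the trace `c n + p` forces `c + p`
to occur exactly once. This gives the spectrum and the entropy
`S(σ_p) = 2 - (3(1-p) log₂(1-p) + (1+3p) log₂(1+3p))/4`. Conjugating by a unitary `U` only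
replaces `v` by `U v`, so `S(U σ_p U†) = S(σ_p)`. Every one-qubit state has entropy at most `1`,
and the reduced state of `σ_p` itself is `I/2`, of entropy exactly `1`; hence
`S(U σ_p U†) - S((U σ_p U†)_A) ≥ 0` for all `U` iff `S(σ_p) ≥ 1`.
-/

theorem Fintype.exists_eq_and_forall_ne_eq_of_sum_eq {ι : Type*} [Fintype ι] {f : ι → ℝ}
    {a b : ℝ} (hab : a ≠ b) (hf : ∀ i, f i = a ∨ f i = b)
    (hsum : ∑ i, f i = a + (Fintype.card ι - 1) * b) :
    ∃ e, f e = a ∧ ∀ i ≠ e, f i = b := by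
  set T := univ.filter fun i => f i = a
  have hcount : ∑ i, (f i - b) = T.card * (a - b) := by
    rw [Finset.sum_congr rfl fun i _ => show f i - b = if f i = a then a - b else 0 by
      rcases hf i with h | h <;> simp [h, hab.symm], ← Finset.sum_filter, sum_const,
      nsmul_eq_mul]
  have hT : T.card = 1 := by
    have : (T.card : ℝ) * (a - b) = 1 * (a - b) := by
      rw [← hcount, Finset.sum_sub_distrib, hsum, sum_const, card_univ, nsmul_eq_mul]
      ring
    exact_mod_cast mul_right_cancel₀ (sub_ne_zero.2 hab) this
  obtain ⟨e, he⟩ := Finset.card_eq_one.1 hT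
  have hmem : ∀ i, f i = a ↔ i = e := fun i => by
    simpa [T] using Finset.ext_iff.1 he i
  exact ⟨e, (hmem e).2 rfl, fun i hi => (hf i).resolve_left (mt (hmem i).1 hi)⟩

namespace Matrix

variable {n : Type*} [Fintype n] [DecidableEq n]

omit [Fintype n] in
theorem isHermitian_smul_vecMulVec_star_add_smul_one (p c : ℝ) (v : n → ℂ) :
    ((p : ℂ) • vecMulVec v (star v) + (c : ℂ) • 1).IsHermitian := by
  refine IsHermitian.add ?_ ?_
  · simp [IsHermitian, conjTranspose_smul, conjTranspose_vecMulVec]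
  · simp [IsHermitian, conjTranspose_smul]

theorem trace_smul_vecMulVec_star_add_smul_one (p c : ℝ) (v : n → ℂ) :
    ((p : ℂ) • vecMulVec v (star v) + (c : ℂ) • 1).trace =
      p * (star v ⬝ᵥ v) + c * Fintype.card n := by
  simp [dotProduct_comm]

theorem IsHermitian.star_dotProduct_eigenvectorBasis {A : Matrix n n ℂ} (h : A.IsHermitian)
    (i : n) : star ⇑(h.eigenvectorBasis i) ⬝ᵥ ⇑(h.eigenvectorBasis i) = 1 := by
  rw [dotProduct_comm, ← EuclideanSpace.inner_eq_star_dotProduct, inner_self_eq_norm_sq_to_K,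
    h.eigenvectorBasis.orthonormal.1 i]
  simp

theorem IsHermitian.eigenvalues_smul_one {c : ℝ}
    (h : ((c : ℂ) • (1 : Matrix n n ℂ)).IsHermitian) (i : n) : h.eigenvalues i = c := by
  rw [h.eigenvalues_eq i, smul_mulVec, one_mulVec, dotProduct_smul,
    h.star_dotProduct_eigenvectorBasis]
  simp

theorem IsHermitian.eigenvalues_smul_vecMulVec_star_add_smul_one {p c : ℝ} {v : n → ℂ}
    (hv : star v ⬝ᵥ v = 1)
    (h : ((p : ℂ) • vecMulVec v (star v) + (c : ℂ) • 1).IsHermitian) (i : n) :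
    h.eigenvalues i = c + p ∨ h.eigenvalues i = c := by
  set x : n → ℂ := ⇑(h.eigenvectorBasis i)
  have hx : x ≠ 0 := (WithLp.ofLp_eq_zero 2).ne.2 <| h.eigenvectorBasis.orthonormal.ne_zero i
  have key : ((h.eigenvalues i : ℂ) - c) • x = ((p : ℂ) * (star v ⬝ᵥ x)) • v := by
    have heig := h.mulVec_eigenvectorBasis i
    rw [add_mulVec, smul_mulVec, vecMulVec_mulVec, smul_mulVec, one_mulVec, op_smul_eq_smul,
      ← Complex.coe_smul] at heig
    rw [sub_smul, ← heig, mul_smul]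
    abel
  have hproj : ((h.eigenvalues i : ℂ) - c - p) * (star v ⬝ᵥ x) = 0 := by
    have := congrArg (star v ⬝ᵥ ·) key
    simp only [dotProduct_smul, hv, smul_eq_mul] at this
    linear_combination this
  rcases mul_eq_zero.1 hproj with hμ | hvx
  · left
    exact_mod_cast (show (h.eigenvalues i : ℂ) = ((c + p : ℝ) : ℂ) by
      push_cast; linear_combination hμ)
  · right
    rw [hvx, mul_zero, zero_smul, smul_eq_zero] at key
    exact_mod_cast sub_eq_zero.1 (key.resolve_right hx)

theorem IsHermitian.exists_eigenvalues_smul_vecMulVec_star_add_smul_one {p c : ℝ} {v : n → ℂ}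
    (hv : star v ⬝ᵥ v = 1)
    (h : ((p : ℂ) • vecMulVec v (star v) + (c : ℂ) • 1).IsHermitian) :
    ∃ e, h.eigenvalues e = c + p ∧ ∀ i ≠ e, h.eigenvalues i = c := by
  have hdich := h.eigenvalues_smul_vecMulVec_star_add_smul_one hv
  rcases eq_or_ne p 0 with rfl | hp
  · have : Nonempty n := by
      by_contra hn
      simp [not_nonempty_iff.1 hn] at hv
    obtain ⟨e⟩ := this
    refine ⟨e, ?_, fun i _ => ?_⟩ <;> simpa using hdich _
  · refine Fintype.exists_eq_and_forall_ne_eq_of_sum_eq (by simpa using hp) hdich ?_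
    have htr := h.trace_eq_sum_eigenvalues
    rw [trace_smul_vecMulVec_star_add_smul_one, hv] at htr
    apply Complex.ofReal_injective
    push_cast
    linear_combination -htr

theorem mul_smul_vecMulVec_star_add_smul_one_mul_conjTranspose {U : Matrix n n ℂ}
    (hU : U ∈ unitaryGroup n ℂ) (p c : ℝ) (v : n → ℂ) :
    U * ((p : ℂ) • vecMulVec v (star v) + (c : ℂ) • 1) * Uᴴ =
      (p : ℂ) • vecMulVec (U *ᵥ v) (star (U *ᵥ v)) + (c : ℂ) • 1 := by
  rw [mem_unitaryGroup_iff, star_eq_conjTranspose] at hU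
  rw [mul_add, add_mul, Matrix.mul_smul, Matrix.smul_mul, mul_vecMulVec, vecMulVec_mul,
    star_mulVec, Matrix.mul_smul, mul_one, Matrix.smul_mul, hU]

theorem star_mulVec_dotProduct_mulVec_of_mem_unitaryGroup {U : Matrix n n ℂ}
    (hU : U ∈ unitaryGroup n ℂ) (v : n → ℂ) :
    star (U *ᵥ v) ⬝ᵥ (U *ᵥ v) = star v ⬝ᵥ v := by
  rw [mem_unitaryGroup_iff', star_eq_conjTranspose] at hU
  rw [star_mulVec, ← dotProduct_mulVec, mulVec_mulVec, hU, one_mulVec]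

theorem trace_mul_mul_conjTranspose_of_mem_unitaryGroup {U : Matrix n n ℂ}
    (hU : U ∈ unitaryGroup n ℂ) (A : Matrix n n ℂ) :
    (U * A * Uᴴ).trace = A.trace := by
  rw [mem_unitaryGroup_iff', star_eq_conjTranspose] at hU
  rw [trace_mul_cycle, hU, one_mul]

end Matrix

theorem vnEntropy_smul_one {N : ℕ} (c : ℝ) :
    vnEntropy ((c : ℂ) • (1 : Matrix (Fin N) (Fin N) ℂ)) = -(N * (c * Real.logb 2 c)) := by
  have h : ((c : ℂ) • (1 : Matrix (Fin N) (Fin N) ℂ)).IsHermitian := by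
    simp [Matrix.IsHermitian, Matrix.conjTranspose_smul]
  rw [vnEntropy, dif_pos h]
  simp [h.eigenvalues_smul_one]

theorem vnEntropy_smul_vecMulVec_star_add_smul_one {N : ℕ} {p c : ℝ} {v : Fin N → ℂ}
    (hv : star v ⬝ᵥ v = 1) :
    vnEntropy ((p : ℂ) • vecMulVec v (star v) + (c : ℂ) • 1) =
      -((c + p) * Real.logb 2 (c + p) + (N - 1) * (c * Real.logb 2 c)) := by
  have h := isHermitian_smul_vecMulVec_star_add_smul_one p c v
  obtain ⟨e, he, hrest⟩ := h.exists_eigenvalues_smul_vecMulVec_star_add_smul_one hv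
  rw [vnEntropy, dif_pos h, ← Finset.add_sum_erase _ _ (mem_univ e),
    Finset.sum_congr rfl fun i hi => by rw [hrest i (Finset.ne_of_mem_erase hi)], sum_const,
    card_erase_of_mem (mem_univ e), card_univ, Fintype.card_fin, nsmul_eq_mul,
    Nat.cast_pred e.pos, he]

theorem vnEntropy_le_one_of_trace_eq_one {τ : Matrix (Fin 2) (Fin 2) ℂ} (h : τ.IsHermitian)
    (htr : τ.trace = 1) : vnEntropy τ ≤ 1 := by
  have hsum : h.eigenvalues 1 = 1 - h.eigenvalues 0 := by
    have := h.trace_eq_sum_eigenvalues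
    rw [htr, Fin.sum_univ_two] at this
    apply Complex.ofReal_injective
    push_cast
    linear_combination -this
  have hbin : vnEntropy τ = Real.binEntropy (h.eigenvalues 0) / Real.log 2 := by
    rw [vnEntropy, dif_pos h, Fin.sum_univ_two, hsum, Real.binEntropy,
      Real.logb, Real.logb, Real.log_inv, Real.log_inv]
    ring
  rw [hbin, div_le_one (Real.log_pos one_lt_two)]
  exact Real.binEntropy_le_log_two

theorem isHermitian_ptraceB {ρ : Matrix (Fin 4) (Fin 4) ℂ} (h : ρ.IsHermitian) :
    (ptraceB ρ).IsHermitian := by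
  ext i j
  simp only [Matrix.conjTranspose_apply, ptraceB, Matrix.of_apply, star_sum, h.apply]

theorem trace_ptraceB (ρ : Matrix (Fin 4) (Fin 4) ℂ) : (ptraceB ρ).trace = ρ.trace := by
  simp [ptraceB, Matrix.trace, Fin.sum_univ_two, Fin.sum_univ_four, add_assoc]

theorem inv_sqrt_two_mul_self : (Real.sqrt 2 : ℂ)⁻¹ * (Real.sqrt 2 : ℂ)⁻¹ = 1 / 2 := by
  rw [← mul_inv, ← Complex.ofReal_mul, Real.mul_self_sqrt zero_le_two]
  norm_num

theorem star_bell_zero_dotProduct : star (bell 0) ⬝ᵥ bell 0 = 1 := by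
  simp [bell, dotProduct, Fin.sum_univ_four, inv_sqrt_two_mul_self]
  norm_num

theorem werner_eq_smul_vecMulVec_add_smul_one (p : ℝ) :
    werner p = (p : ℂ) • vecMulVec (bell 0) (star (bell 0)) + (((1 - p) / 4 : ℝ) : ℂ) • 1 :=
  rfl

theorem isHermitian_werner (p : ℝ) : (werner p).IsHermitian :=
  isHermitian_smul_vecMulVec_star_add_smul_one _ _ _

theorem trace_werner (p : ℝ) : (werner p).trace = 1 := by
  rw [werner_eq_smul_vecMulVec_add_smul_one, trace_smul_vecMulVec_star_add_smul_one,
    star_bell_zero_dotProduct, Fintype.card_fin]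
  push_cast
  ring

theorem exists_eigenvalues_werner (p : ℝ) :
    ∃ h : (werner p).IsHermitian, ∃ e : Fin 4,
      h.eigenvalues e = (1 + 3 * p) / 4 ∧ ∀ i ≠ e, h.eigenvalues i = (1 - p) / 4 := by
  obtain ⟨e, he, hrest⟩ :=
    (isHermitian_werner p).exists_eigenvalues_smul_vecMulVec_star_add_smul_one
      star_bell_zero_dotProduct
  exact ⟨isHermitian_werner p, e, he.trans (by ring), hrest⟩

theorem ptraceB_werner (p : ℝ) : ptraceB (werner p) = ((1 / 2 : ℝ) : ℂ) • 1 := by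
  ext i j
  fin_cases i <;> fin_cases j <;>
    simp [ptraceB, werner, proj, bell, Fin.sum_univ_two, Matrix.one_apply, vecMulVec_apply,
      -cons_vecMulVec, -vecMulVec_cons, inv_sqrt_two_mul_self] <;>
    ring

theorem mul_logb_div_four (x : ℝ) :
    x / 4 * Real.logb 2 (x / 4) = x / 4 * (Real.logb 2 x - 2) := by
  rcases eq_or_ne x 0 with rfl | hx
  · simp
  · rw [Real.logb_div hx four_ne_zero, show (4 : ℝ) = 2 ^ 2 by norm_num, Real.logb_pow,
      Real.logb_self_eq_one one_lt_two]
    norm_num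

theorem vnEntropy_werner (p : ℝ) :
    vnEntropy (werner p) =
      2 - (3 * (1 - p) * Real.logb 2 (1 - p) + (1 + 3 * p) * Real.logb 2 (1 + 3 * p)) / 4 := by
  rw [werner_eq_smul_vecMulVec_add_smul_one,
    vnEntropy_smul_vecMulVec_star_add_smul_one star_bell_zero_dotProduct,
    show (1 - p) / 4 + p = (1 + 3 * p) / 4 by ring, mul_logb_div_four, mul_logb_div_four]
  push_cast
  ring

theorem vnEntropy_mul_werner_mul_conjTranspose {U : Matrix (Fin 4) (Fin 4) ℂ}
    (hU : U ∈ unitaryGroup (Fin 4) ℂ) (p : ℝ) :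
    vnEntropy (U * werner p * Uᴴ) = vnEntropy (werner p) := by
  rw [werner_eq_smul_vecMulVec_add_smul_one,
    mul_smul_vecMulVec_star_add_smul_one_mul_conjTranspose hU,
    vnEntropy_smul_vecMulVec_star_add_smul_one star_bell_zero_dotProduct,
    vnEntropy_smul_vecMulVec_star_add_smul_one
      ((star_mulVec_dotProduct_mulVec_of_mem_unitaryGroup hU _).trans star_bell_zero_dotProduct)]

theorem vnEntropy_ptraceB_werner (p : ℝ) : vnEntropy (ptraceB (werner p)) = 1 := by
  rw [ptraceB_werner, vnEntropy_smul_one, one_div, Real.logb_inv,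
    Real.logb_self_eq_one one_lt_two]
  norm_num

theorem stmt_9_general (p : ℝ) :
    (1 ≤ vnEntropy (werner p) ↔
      3 * (1 - p) * Real.logb 2 (1 - p) + (1 + 3 * p) * Real.logb 2 (1 + 3 * p) ≤ 4) ∧
    ((∀ U ∈ Matrix.unitaryGroup (Fin 4) ℂ, 0 ≤ condEntropy (U * werner p * Uᴴ)) ↔
      3 * (1 - p) * Real.logb 2 (1 - p) + (1 + 3 * p) * Real.logb 2 (1 + 3 * p) ≤ 4) ∧
    (∃ h : (werner p).IsHermitian, ∃ e : Fin 4,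
      h.eigenvalues e = (1 + 3 * p) / 4 ∧
      ∀ i : Fin 4, i ≠ e → h.eigenvalues i = (1 - p) / 4) := by
  have hS := vnEntropy_werner p
  refine ⟨by rw [hS]; constructor <;> intro h <;> linarith, ⟨fun h => ?_, fun h U hU => ?_⟩,
    exists_eigenvalues_werner p⟩
  · have h1 := h 1 (one_mem _)
    rw [conjTranspose_one, one_mul, mul_one, condEntropy, vnEntropy_ptraceB_werner, hS] at h1
    linarith
  · have hle := vnEntropy_le_one_of_trace_eq_one
      (isHermitian_ptraceB (isHermitian_mul_mul_conjTranspose U (isHermitian_werner p)))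
      (by rw [trace_ptraceB, trace_mul_mul_conjTranspose_of_mem_unitaryGroup hU, trace_werner])
    rw [condEntropy, vnEntropy_mul_werner_mul_conjTranspose hU, hS]
    linarith

/-- For the Werner state `σ_p` with `p ∈ [0,1)`, `S(σ_p) ≥ 1`
(equivalently `σ_p ∈ ACVENN`) iff `3(1-p)log₂(1-p) + (1+3p)log₂(1+3p) ≤ 4`;
in particular the eigenvalues of `σ_p` are `(1+3p)/4` (multiplicity one) and
`(1-p)/4` (multiplicity three). -/
theorem stmt_9 (p : ℝ) (hp : p ∈ Set.Ico (0 : ℝ) 1) :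
    (1 ≤ vnEntropy (werner p) ↔
      3 * (1 - p) * Real.logb 2 (1 - p) + (1 + 3 * p) * Real.logb 2 (1 + 3 * p) ≤ 4) ∧
    ((∀ U ∈ Matrix.unitaryGroup (Fin 4) ℂ, 0 ≤ condEntropy (U * werner p * Uᴴ)) ↔
      3 * (1 - p) * Real.logb 2 (1 - p) + (1 + 3 * p) * Real.logb 2 (1 + 3 * p) ≤ 4) ∧
    (∃ h : (werner p).IsHermitian, ∃ e : Fin 4,
      h.eigenvalues e = (1 + 3 * p) / 4 ∧
      ∀ i : Fin 4, i ≠ e → h.eigenvalues i = (1 - p) / 4) :=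
  stmt_9_general p
end
end

section
/- Every absolutely Bell-CHSH local Werner state belongs to ACVENN: if p ∈ [0, 1/√2], then the Werner state σ_p satisfies S(σ_p) ≥ 1, and hence σ_p ∈ ACVENN. -/
open Matrix Finset
open scoped Kronecker ComplexOrder Classical

noncomputable section

/-!
Conjugating by the Bell unitary diagonalises `σ_p`, with spectrum `(1 + 3p)/4` and three times
`(1 - p)/4`; so `S(σ_p)`, measured in nats, is the `4`-ary entropy `h₄(3(1 - p)/4)`. This function
increases on `[0, 3/4]`, and `h₄(1/5) ≥ log 2` is the inequality `2¹³ ≤ 3 · 5⁵`; hence `S(σ_p) ≥ 1`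
as soon as `3(1 - p)/4 ≥ 1/5`, i.e. for `p ∈ [0, 11/15] ⊇ [0, 1/√2]`.
Conjugation by a unitary keeps the characteristic polynomial and hence the entropy, while the reduced
state of a two-qubit state is a qubit state, of entropy at most one bit. So `S(UσU†) ≥ 1 ≥ S((UσU†)_A)`.
-/

open Real Polynomial

theorem Matrix.IsHermitian.sum_comp_eigenvalues_of_charpoly_eq {𝕜 ι : Type*} [RCLike 𝕜]
    [Fintype ι] [DecidableEq ι] {A : Matrix ι ι 𝕜} (hA : A.IsHermitian) {d : ι → ℝ}
    (h : A.charpoly = (diagonal fun i => (d i : 𝕜)).charpoly) (f : ℝ → ℝ) :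
    ∑ i, f (hA.eigenvalues i) = ∑ i, f (d i) := by
  have hroots : univ.val.map hA.eigenvalues = univ.val.map d := by
    apply Multiset.map_injective (RCLike.ofReal_injective (K := 𝕜))
    have hD : (diagonal fun i => (d i : 𝕜)).charpoly.roots = univ.val.map fun i => (d i : 𝕜) := by
      rw [charpoly_diagonal, roots_prod _ _ (by simp [Finset.prod_ne_zero_iff, X_sub_C_ne_zero])]
      simp
    simpa [Multiset.map_map, hA.roots_charpoly_eq_eigenvalues, hD] using congrArg roots h
  simpa [Multiset.map_map] using congrArg (fun s => (s.map f).sum) hroots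

theorem Matrix.charpoly_unitary_conj {R ι : Type*} [CommRing R] [StarRing R] [Fintype ι]
    [DecidableEq ι] (A : Matrix ι ι R) {U : Matrix ι ι R} (hU : U ∈ unitaryGroup ι R) :
    (U * A * Uᴴ).charpoly = A.charpoly := by
  rw [charpoly_mul_comm, ← Matrix.mul_assoc, ← star_eq_conjTranspose,
    Unitary.star_mul_self_of_mem hU, Matrix.one_mul]

theorem IsState.unitary_conj {n : ℕ} {ρ U : Matrix (Fin n) (Fin n) ℂ} (hρ : IsState ρ)
    (hU : U ∈ unitaryGroup (Fin n) ℂ) : IsState (U * ρ * Uᴴ) :=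
  ⟨hρ.1.mul_mul_conjTranspose_same U, by
    rw [trace_mul_cycle, ← star_eq_conjTranspose, Unitary.star_mul_self_of_mem hU,
      Matrix.one_mul, hρ.2]⟩

theorem isState_diagonal {n : ℕ} {d : Fin n → ℝ} (hd : ∀ i, 0 ≤ d i) (hsum : ∑ i, d i = 1) :
    IsState (diagonal fun i => (d i : ℂ)) :=
  ⟨PosSemidef.diagonal fun i => Complex.zero_le_real.mpr (hd i), by
    simp [trace_diagonal, ← Complex.ofReal_sum, hsum]⟩

theorem vnEntropy_eq_sum_negMulLog {n : ℕ} {ρ : Matrix (Fin n) (Fin n) ℂ} (hρ : ρ.IsHermitian) :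
    vnEntropy ρ = (∑ i, negMulLog (hρ.eigenvalues i)) / log 2 := by
  simp only [vnEntropy, dif_pos hρ, negMulLog, logb, Finset.sum_div, ← Finset.sum_neg_distrib]
  congr 1; ext i; ring

theorem vnEntropy_eq_of_charpoly_eq_diagonal {n : ℕ} {ρ : Matrix (Fin n) (Fin n) ℂ}
    (hρ : ρ.IsHermitian) {d : Fin n → ℝ} (h : ρ.charpoly = (diagonal fun i => (d i : ℂ)).charpoly) :
    vnEntropy ρ = (∑ i, negMulLog (d i)) / log 2 := by
  rw [vnEntropy_eq_sum_negMulLog hρ, hρ.sum_comp_eigenvalues_of_charpoly_eq h]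

theorem vnEntropy_le_one_of_isState {ρ : Matrix (Fin 2) (Fin 2) ℂ} (hρ : IsState ρ) :
    vnEntropy ρ ≤ 1 := by
  have hH := hρ.1.isHermitian
  have htrace : hH.eigenvalues 0 + hH.eigenvalues 1 = 1 := by
    have := hH.trace_eq_sum_eigenvalues
    rw [hρ.2, Fin.sum_univ_two] at this
    exact RCLike.ofReal_injective (K := ℂ) (by simpa using this.symm)
  have hbin : negMulLog (hH.eigenvalues 0) + negMulLog (hH.eigenvalues 1)
      = binEntropy (hH.eigenvalues 0) := by
    rw [binEntropy_eq_negMulLog_add_negMulLog_one_sub, ← htrace, add_sub_cancel_left]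
  rw [vnEntropy_eq_sum_negMulLog hH, Fin.sum_univ_two, hbin, div_le_one (log_pos one_lt_two)]
  exact binEntropy_le_log_two

def tensorRight (k : Fin 2) : Matrix (Fin 4) (Fin 2) ℂ :=
  of fun r i => if r.val = 2 * i.val + k.val then 1 else 0

theorem ptraceB_eq_sum_conj (ρ : Matrix (Fin 4) (Fin 4) ℂ) :
    ptraceB ρ = ∑ k : Fin 2, (tensorRight k)ᴴ * ρ * tensorRight k := by
  ext i j
  fin_cases i <;> fin_cases j <;>
    simp [ptraceB, tensorRight, mul_apply, Fin.sum_univ_four, Fin.sum_univ_two]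

theorem isState_ptraceB {ρ : Matrix (Fin 4) (Fin 4) ℂ} (hρ : IsState ρ) : IsState (ptraceB ρ) := by
  refine ⟨?_, ?_⟩
  · rw [ptraceB_eq_sum_conj]
    exact posSemidef_sum _ fun k _ => hρ.1.conjTranspose_mul_mul_same _
  · rw [← hρ.2]
    simp [trace, ptraceB, Fin.sum_univ_four, Fin.sum_univ_two]
    ring

def wernerSpectrum (p : ℝ) : Fin 4 → ℝ := ![(1 + 3 * p) / 4, (1 - p) / 4, (1 - p) / 4, (1 - p) / 4]

def bellUnitary : Matrix (Fin 4) (Fin 4) ℂ := (of bell)ᵀ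

theorem ofReal_sqrt_two_sq : (Real.sqrt 2 : ℂ) ^ 2 = 2 := by
  norm_cast; exact Real.sq_sqrt zero_le_two

theorem bellUnitary_mem_unitaryGroup : bellUnitary ∈ unitaryGroup (Fin 4) ℂ := by
  rw [mem_unitaryGroup_iff, star_eq_conjTranspose]
  ext i j
  fin_cases i <;> fin_cases j <;>
    simp [bellUnitary, bell, mul_apply, Fin.sum_univ_four, conjTranspose_apply, one_apply] <;>
    ring_nf <;> simp [inv_pow, ofReal_sqrt_two_sq]

theorem werner_eq_conj_diagonal (p : ℝ) :
    werner p = bellUnitary * diagonal (fun i => (wernerSpectrum p i : ℂ)) * bellUnitaryᴴ := by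
  ext i j
  fin_cases i <;> fin_cases j <;>
    simp [werner, proj, bellUnitary, bell, wernerSpectrum, mul_apply, Fin.sum_univ_four,
      conjTranspose_apply, one_apply, vecMulVec_apply, diagonal, -cons_vecMulVec,
      -vecMulVec_cons] <;>
    ring_nf <;> simp [inv_pow, ofReal_sqrt_two_sq] <;> ring

theorem isState_werner {p : ℝ} (h0 : 0 ≤ p) (h1 : p ≤ 1) : IsState (werner p) := by
  rw [werner_eq_conj_diagonal]
  refine (isState_diagonal (fun i => ?_) ?_).unitary_conj bellUnitary_mem_unitaryGroup
  · fin_cases i <;> simp [wernerSpectrum] <;> linarith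
  · simp [wernerSpectrum, Fin.sum_univ_four]; ring

theorem sum_negMulLog_wernerSpectrum (p : ℝ) :
    ∑ i, negMulLog (wernerSpectrum p i) = qaryEntropy 4 (3 * (1 - p) / 4) := by
  have hb : 3 * (1 - p) / 4 = 3 * ((1 - p) / 4) := by ring
  have ha : 1 - 3 * ((1 - p) / 4) = (1 + 3 * p) / 4 := by ring
  rw [hb, qaryEntropy, binEntropy_eq_negMulLog_add_negMulLog_one_sub, ha, negMulLog_mul,
    Fin.sum_univ_four]
  simp [wernerSpectrum, negMulLog]
  ring

theorem log_two_le_qaryEntropy_four {x : ℝ} (h1 : 1 / 5 ≤ x) (h2 : x ≤ 3 / 4) :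
    log 2 ≤ qaryEntropy 4 x := by
  have hnum : log (2 ^ 13) ≤ log (3 * 5 ^ 5) := log_le_log (by norm_num) (by norm_num)
  rw [log_pow, log_mul (by norm_num) (by norm_num), log_pow] at hnum
  calc log 2 ≤ qaryEntropy 4 (1 / 5) := by
        have h45 : log (1 - 5⁻¹) = 2 * log 2 - log 5 := by
          rw [show (1 : ℝ) - 5⁻¹ = 2 ^ 2 / 5 by norm_num, log_div (by norm_num) (by norm_num),
            log_pow]
          push_cast; ring
        simp only [qaryEntropy, binEntropy, one_div, log_inv, h45]
        push_cast at hnum ⊢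
        linarith
    _ ≤ qaryEntropy 4 x :=
        (qaryEntropy_strictMonoOn (q := 4) (by norm_num)).monotoneOn
          ⟨by norm_num, by norm_num⟩ ⟨by linarith, by norm_num; linarith⟩ h1

theorem one_le_vnEntropy_unitary_conj_werner {p : ℝ} (h0 : 0 ≤ p) (h1 : p ≤ 11 / 15)
    {U : Matrix (Fin 4) (Fin 4) ℂ} (hU : U ∈ unitaryGroup (Fin 4) ℂ) :
    1 ≤ vnEntropy (U * werner p * Uᴴ) := by
  have hstate := (isState_werner h0 (by linarith)).unitary_conj hU
  have hcharpoly : (U * werner p * Uᴴ).charpoly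
      = (diagonal fun i => (wernerSpectrum p i : ℂ)).charpoly := by
    rw [charpoly_unitary_conj _ hU, werner_eq_conj_diagonal,
      charpoly_unitary_conj _ bellUnitary_mem_unitaryGroup]
  rw [vnEntropy_eq_of_charpoly_eq_diagonal hstate.1.isHermitian hcharpoly,
    sum_negMulLog_wernerSpectrum, one_le_div (log_pos one_lt_two)]
  exact log_two_le_qaryEntropy_four (by linarith) (by linarith)

/-- Every absolutely Bell-CHSH local Werner state (`p ∈ [0, 1/√2]`)
satisfies `S(σ_p) ≥ 1`, hence belongs to ACVENN. -/
theorem stmt_16 (p : ℝ) (hp : p ∈ Set.Icc (0 : ℝ) (1 / Real.sqrt 2)) :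
    1 ≤ vnEntropy (werner p) ∧
    (IsState (werner p) ∧
      ∀ U ∈ Matrix.unitaryGroup (Fin 4) ℂ, 0 ≤ condEntropy (U * werner p * Uᴴ)) := by
  obtain ⟨h0, hsqrt⟩ := hp
  have h11 : p ≤ 11 / 15 := hsqrt.trans <| by
    rw [div_le_div_iff₀ (sqrt_pos.mpr two_pos) (by norm_num)]
    nlinarith [sq_sqrt zero_le_two, sqrt_nonneg 2]
  have hstate := isState_werner h0 (by linarith)
  refine ⟨by simpa using one_le_vnEntropy_unitary_conj_werner h0 h11 (one_mem _), hstate,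
    fun U hU => ?_⟩
  have hA := one_le_vnEntropy_unitary_conj_werner h0 h11 hU
  have hB := vnEntropy_le_one_of_isState (isState_ptraceB (hstate.unitary_conj hU))
  rw [condEntropy]
  linarith
end
end
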